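/- Let u : ℝ⁴ → ℝ be a smooth solution of Plebański's second heavenly equation u_{xz} = u_{ty} + u_{yy}u_{zz} − u_{yz}², and let λ ∈ ℝ. Then the operators ∂_t − (u_{yz}+λ)∂_z + u_{zz}∂_y and ∂_x − u_{yy}∂_z + (u_{yz}−λ)∂_y commute on smooth functions v : ℝ⁴ → ℝ. -/

import Mathlib

/-- Partial derivative with respect to the first coordinate `t`. -/
noncomputable def pT (f : ℝ → ℝ → ℝ → ℝ → ℝ) : ℝ → ℝ → ℝ → ℝ → ℝ :=
  fun t x y z => deriv (fun s => f s x y z) t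

/-- Partial derivative with respect to the second coordinate `x`. -/
noncomputable def pX (f : ℝ → ℝ → ℝ → ℝ → ℝ) : ℝ → ℝ → ℝ → ℝ → ℝ :=
  fun t x y z => deriv (fun s => f t s y z) x

/-- Partial derivative with respect to the third coordinate `y`. -/
noncomputable def pY (f : ℝ → ℝ → ℝ → ℝ → ℝ) : ℝ → ℝ → ℝ → ℝ → ℝ :=
  fun t x y z => deriv (fun s => f t x s z) y

/-- Partial derivative with respect to the fourth coordinate `z`. -/
noncomputable def pZ (f : ℝ → ℝ → ℝ → ℝ → ℝ) : ℝ → ℝ → ℝ → ℝ → ℝ :=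
  fun t x y z => deriv (fun s => f t x y s) z

/-- Smoothness of a function of four real variables. -/
def Smooth4 (f : ℝ → ℝ → ℝ → ℝ → ℝ) : Prop :=
  ContDiff ℝ (⊤ : ℕ∞) (fun p : ℝ × ℝ × ℝ × ℝ => f p.1 p.2.1 p.2.2.1 p.2.2.2)

/-- The second-heavenly-equation expression `E = u_xz - u_ty - u_yy u_zz + u_yz ^ 2`. -/
noncomputable def heavenlyE (u : ℝ → ℝ → ℝ → ℝ → ℝ) : ℝ → ℝ → ℝ → ℝ → ℝ :=
  fun t x y z =>
    pX (pZ u) t x y z - pT (pY u) t x y z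
      - pY (pY u) t x y z * pZ (pZ u) t x y z + (pY (pZ u) t x y z) ^ 2

/-- `u` solves Plebański's second heavenly equation. -/
def IsHeavenly (u : ℝ → ℝ → ℝ → ℝ → ℝ) : Prop :=
  ∀ t x y z : ℝ,
    pX (pZ u) t x y z =
      pT (pY u) t x y z + pY (pY u) t x y z * pZ (pZ u) t x y z - (pY (pZ u) t x y z) ^ 2

/-- The operator `∂_t − (u_yz+λ)∂_z + u_zz ∂_y`. -/
noncomputable def opA (u : ℝ → ℝ → ℝ → ℝ → ℝ) (lam : ℝ) (w : ℝ → ℝ → ℝ → ℝ → ℝ) :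
    ℝ → ℝ → ℝ → ℝ → ℝ :=
  fun t x y z =>
    pT w t x y z - (pY (pZ u) t x y z + lam) * pZ w t x y z + pZ (pZ u) t x y z * pY w t x y z

/-- The operator `∂_x − u_yy ∂_z + (u_yz−λ)∂_y`. -/
noncomputable def opB (u : ℝ → ℝ → ℝ → ℝ → ℝ) (lam : ℝ) (w : ℝ → ℝ → ℝ → ℝ → ℝ) :
    ℝ → ℝ → ℝ → ℝ → ℝ :=
  fun t x y z =>
    pX w t x y z - pY (pY u) t x y z * pZ w t x y z + (pY (pZ u) t x y z - lam) * pY w t x y z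


noncomputable section LaxAux

abbrev E4 : Type := ℝ × ℝ × ℝ × ℝ

/-- directional derivative along `w`. -/
noncomputable def DD (w : E4) (F : E4 → ℝ) : E4 → ℝ := fun p => fderiv ℝ F p w

lemma DD_contDiff {F : E4 → ℝ} (hF : ContDiff ℝ (⊤ : ℕ∞) F) (w : E4) : ContDiff ℝ (⊤ : ℕ∞) (DD w F) :=
  (hF.fderiv_right ((by simp))).clm_apply contDiff_const

lemma DD_comm {F : E4 → ℝ} (hF : ContDiff ℝ (⊤ : ℕ∞) F) (v w : E4) (p : E4) :
    DD v (DD w F) p = DD w (DD v F) p := by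
  have hd : Differentiable ℝ F := hF.differentiable (by simp)
  have h1 : ∀ q, HasFDerivAt F (fderiv ℝ F q) q := fun q => (hd q).hasFDerivAt
  have hf' : ContDiff ℝ (⊤ : ℕ∞) (fderiv ℝ F) := hF.fderiv_right (by simp)
  have h2 : HasFDerivAt (fderiv ℝ F) (fderiv ℝ (fderiv ℝ F) p) p :=
    (hf'.differentiable (by simp) p).hasFDerivAt
  have key : ∀ u : E4, fderiv ℝ (DD u F) p =
      (ContinuousLinearMap.apply ℝ ℝ u).comp (fderiv ℝ (fderiv ℝ F) p) := fun u =>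
    (((ContinuousLinearMap.apply ℝ ℝ u).hasFDerivAt).comp p h2).fderiv
  have hsymm := second_derivative_symmetric h1 h2 v w
  show fderiv ℝ (DD w F) p v = fderiv ℝ (DD v F) p w
  rw [key, key]
  simpa using hsymm

lemma DD_add {F G : E4 → ℝ} (hF : ContDiff ℝ (⊤ : ℕ∞) F) (hG : ContDiff ℝ (⊤ : ℕ∞) G) (w : E4) (p : E4) :
    DD w (fun q => F q + G q) p = DD w F p + DD w G p := by
  simp [DD, fderiv_fun_add (hF.differentiable (by simp) p)
    (hG.differentiable (by simp) p)]

lemma DD_sub {F G : E4 → ℝ} (hF : ContDiff ℝ (⊤ : ℕ∞) F) (hG : ContDiff ℝ (⊤ : ℕ∞) G) (w : E4) (p : E4) :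
    DD w (fun q => F q - G q) p = DD w F p - DD w G p := by
  simp [DD, fderiv_fun_sub (hF.differentiable (by simp) p)
    (hG.differentiable (by simp) p)]

lemma DD_mul {F G : E4 → ℝ} (hF : ContDiff ℝ (⊤ : ℕ∞) F) (hG : ContDiff ℝ (⊤ : ℕ∞) G) (w : E4) (p : E4) :
    DD w (fun q => F q * G q) p = F p * DD w G p + G p * DD w F p := by
  simp [DD, fderiv_fun_mul (hF.differentiable (by simp) p)
    (hG.differentiable (by simp) p)]

lemma DD_add_const {F : E4 → ℝ} (k : ℝ) (w : E4) (p : E4) :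
    DD w (fun q => F q + k) p = DD w F p := by
  simp [DD, fderiv_add_const]

lemma DD_sub_const {F : E4 → ℝ} (k : ℝ) (w : E4) (p : E4) :
    DD w (fun q => F q - k) p = DD w F p := by
  simp [DD, fderiv_sub_const]

/-- uncurrying -/
def UC (f : ℝ → ℝ → ℝ → ℝ → ℝ) : E4 → ℝ := fun p => f p.1 p.2.1 p.2.2.1 p.2.2.2

lemma smooth4_iff {f : ℝ → ℝ → ℝ → ℝ → ℝ} : Smooth4 f ↔ ContDiff ℝ (⊤ : ℕ∞) (UC f) := Iff.rfl

def e1 : E4 := (1,0,0,0)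
def e2 : E4 := (0,1,0,0)
def e3 : E4 := (0,0,1,0)
def e4 : E4 := (0,0,0,1)

lemma pT_eq {f : ℝ → ℝ → ℝ → ℝ → ℝ} (hf : Smooth4 f) (t x y z : ℝ) :
    pT f t x y z = DD e1 (UC f) (t, x, y, z) := by
  have hι : HasDerivAt (fun s : ℝ => ((s, x, y, z) : E4)) e1 t :=
    (hasDerivAt_id t).prodMk (((hasDerivAt_const t x).prodMk
      ((hasDerivAt_const t y).prodMk (hasDerivAt_const t z))))
  have h := ((hf.differentiable (by simp)) ((t, x, y, z) : E4)).hasFDerivAt.comp_hasDerivAt t hι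
  exact h.deriv

lemma pX_eq {f : ℝ → ℝ → ℝ → ℝ → ℝ} (hf : Smooth4 f) (t x y z : ℝ) :
    pX f t x y z = DD e2 (UC f) (t, x, y, z) := by
  have hι : HasDerivAt (fun s : ℝ => ((t, s, y, z) : E4)) e2 x :=
    (hasDerivAt_const x t).prodMk (((hasDerivAt_id x).prodMk
      ((hasDerivAt_const x y).prodMk (hasDerivAt_const x z))))
  have h := ((hf.differentiable (by simp)) ((t, x, y, z) : E4)).hasFDerivAt.comp_hasDerivAt x hι
  exact h.deriv

lemma pY_eq {f : ℝ → ℝ → ℝ → ℝ → ℝ} (hf : Smooth4 f) (t x y z : ℝ) :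
    pY f t x y z = DD e3 (UC f) (t, x, y, z) := by
  have hι : HasDerivAt (fun s : ℝ => ((t, x, s, z) : E4)) e3 y :=
    (hasDerivAt_const y t).prodMk (((hasDerivAt_const y x).prodMk
      ((hasDerivAt_id y).prodMk (hasDerivAt_const y z))))
  have h := ((hf.differentiable (by simp)) ((t, x, y, z) : E4)).hasFDerivAt.comp_hasDerivAt y hι
  exact h.deriv

lemma pZ_eq {f : ℝ → ℝ → ℝ → ℝ → ℝ} (hf : Smooth4 f) (t x y z : ℝ) :
    pZ f t x y z = DD e4 (UC f) (t, x, y, z) := by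
  have hι : HasDerivAt (fun s : ℝ => ((t, x, y, s) : E4)) e4 z :=
    (hasDerivAt_const z t).prodMk (((hasDerivAt_const z x).prodMk
      ((hasDerivAt_const z y).prodMk (hasDerivAt_id z))))
  have h := ((hf.differentiable (by simp)) ((t, x, y, z) : E4)).hasFDerivAt.comp_hasDerivAt z hι
  exact h.deriv

lemma UC_pY {f : ℝ → ℝ → ℝ → ℝ → ℝ} (hf : Smooth4 f) : UC (pY f) = DD e3 (UC f) := by
  funext p; obtain ⟨t, x, y, z⟩ := p; exact pY_eq hf t x y z

lemma UC_pZ {f : ℝ → ℝ → ℝ → ℝ → ℝ} (hf : Smooth4 f) : UC (pZ f) = DD e4 (UC f) := by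
  funext p; obtain ⟨t, x, y, z⟩ := p; exact pZ_eq hf t x y z

end LaxAux
noncomputable section LaxOps


/-- generic first-order operator `∂_i − P ∂₄ + Q ∂₃`. -/
noncomputable def LOp (i : E4) (P Q : E4 → ℝ) (W : E4 → ℝ) : E4 → ℝ :=
  fun p => DD i W p - P p * DD e4 W p + Q p * DD e3 W p

lemma LOp_contDiff {P Q W : E4 → ℝ} (hP : ContDiff ℝ (⊤ : ℕ∞) P) (hQ : ContDiff ℝ (⊤ : ℕ∞) Q)
    (hW : ContDiff ℝ (⊤ : ℕ∞) W) (i : E4) : ContDiff ℝ (⊤ : ℕ∞) (LOp i P Q W) :=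
  ((DD_contDiff hW i).sub (hP.mul (DD_contDiff hW e4))).add (hQ.mul (DD_contDiff hW e3))

lemma DD_LOp {P Q W : E4 → ℝ} (hP : ContDiff ℝ (⊤ : ℕ∞) P) (hQ : ContDiff ℝ (⊤ : ℕ∞) Q)
    (hW : ContDiff ℝ (⊤ : ℕ∞) W) (i w : E4) (p : E4) :
    DD w (LOp i P Q W) p =
      DD w (DD i W) p
        - (P p * DD w (DD e4 W) p + DD e4 W p * DD w P p)
        + (Q p * DD w (DD e3 W) p + DD e3 W p * DD w Q p) := by
  have h1 : ContDiff ℝ (⊤ : ℕ∞) (fun q => DD i W q - P q * DD e4 W q) :=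
    (DD_contDiff hW i).sub (hP.mul (DD_contDiff hW e4))
  have h2 : ContDiff ℝ (⊤ : ℕ∞) (fun q => Q q * DD e3 W q) := hQ.mul (DD_contDiff hW e3)
  have : DD w (LOp i P Q W) p = DD w (fun q => DD i W q - P q * DD e4 W q) p
      + DD w (fun q => Q q * DD e3 W q) p := DD_add h1 h2 w p
  rw [this, DD_sub (DD_contDiff hW i) (hP.mul (DD_contDiff hW e4)) w p,
    DD_mul hP (DD_contDiff hW e4) w p, DD_mul hQ (DD_contDiff hW e3) w p]

lemma LOp_commutator {P Q R S W : E4 → ℝ} (hP : ContDiff ℝ (⊤ : ℕ∞) P) (hQ : ContDiff ℝ (⊤ : ℕ∞) Q)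
    (hR : ContDiff ℝ (⊤ : ℕ∞) R) (hS : ContDiff ℝ (⊤ : ℕ∞) S) (hW : ContDiff ℝ (⊤ : ℕ∞) W) (i j : E4) (p : E4) :
    LOp i P Q (LOp j R S W) p - LOp j R S (LOp i P Q W) p =
      (LOp j R S P p - LOp i P Q R p) * DD e4 W p
        + (LOp i P Q S p - LOp j R S Q p) * DD e3 W p := by
  have eAB : LOp i P Q (LOp j R S W) p =
      DD i (LOp j R S W) p - P p * DD e4 (LOp j R S W) p + Q p * DD e3 (LOp j R S W) p := rfl
  have eBA : LOp j R S (LOp i P Q W) p =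
      DD j (LOp i P Q W) p - R p * DD e4 (LOp i P Q W) p + S p * DD e3 (LOp i P Q W) p := rfl
  rw [eAB, eBA,
    DD_LOp hR hS hW j i p, DD_LOp hR hS hW j e4 p, DD_LOp hR hS hW j e3 p,
    DD_LOp hP hQ hW i j p, DD_LOp hP hQ hW i e4 p, DD_LOp hP hQ hW i e3 p,
    DD_comm hW j i p, DD_comm hW e4 i p, DD_comm hW e3 i p,
    DD_comm hW e4 j p, DD_comm hW e3 j p, DD_comm hW e4 e3 p]
  simp only [LOp]
  ring

end LaxOps
theorem lax_operators_commute (u : ℝ → ℝ → ℝ → ℝ → ℝ) (hu : Smooth4 u)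
    (hsol : IsHeavenly u) (lam : ℝ) :
    ∀ v : ℝ → ℝ → ℝ → ℝ → ℝ, Smooth4 v →
      ∀ t x y z : ℝ,
        opA u lam (opB u lam v) t x y z = opB u lam (opA u lam v) t x y z := by
  intro v hv t x y z
  have hF : ContDiff ℝ (⊤ : ℕ∞) (UC u) := hu
  have hV : ContDiff ℝ (⊤ : ℕ∞) (UC v) := hv
  have h4 : ContDiff ℝ (⊤ : ℕ∞) (DD e4 (UC u)) := DD_contDiff hF e4
  have h3 : ContDiff ℝ (⊤ : ℕ∞) (DD e3 (UC u)) := DD_contDiff hF e3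
  have hA : ContDiff ℝ (⊤ : ℕ∞) (DD e3 (DD e4 (UC u))) := DD_contDiff h4 e3
  have hB : ContDiff ℝ (⊤ : ℕ∞) (DD e4 (DD e4 (UC u))) := DD_contDiff h4 e4
  have hC : ContDiff ℝ (⊤ : ℕ∞) (DD e3 (DD e3 (UC u))) := DD_contDiff h3 e3
  have h13 : ContDiff ℝ (⊤ : ℕ∞) (DD e1 (DD e3 (UC u))) := DD_contDiff h3 e1
  have hP : ContDiff ℝ (⊤ : ℕ∞) (fun q => DD e3 (DD e4 (UC u)) q + lam) := hA.add contDiff_const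
  have hS : ContDiff ℝ (⊤ : ℕ∞) (fun q => DD e3 (DD e4 (UC u)) q - lam) := hA.sub contDiff_const
  have hyu : Smooth4 (pY u) := by rw [smooth4_iff, UC_pY hu]; exact h3
  have hzu : Smooth4 (pZ u) := by rw [smooth4_iff, UC_pZ hu]; exact h4
  -- the heavenly equation in directional-derivative form
  have hH : DD e2 (DD e4 (UC u)) = fun q =>
      DD e1 (DD e3 (UC u)) q + DD e3 (DD e3 (UC u)) q * DD e4 (DD e4 (UC u)) q
        - DD e3 (DD e4 (UC u)) q * DD e3 (DD e4 (UC u)) q := by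
    funext p
    obtain ⟨t', x', y', z'⟩ := p
    have h := hsol t' x' y' z'
    rw [pX_eq hzu, pT_eq hyu, pY_eq hyu, pZ_eq hzu, pY_eq hzu, UC_pY hu, UC_pZ hu] at h
    rw [h]; ring
  -- derivative of the heavenly equation in direction w
  have hHd : ∀ (w p : E4), DD w (DD e2 (DD e4 (UC u))) p =
      DD w (DD e1 (DD e3 (UC u))) p
        + (DD e3 (DD e3 (UC u)) p * DD w (DD e4 (DD e4 (UC u))) p
            + DD e4 (DD e4 (UC u)) p * DD w (DD e3 (DD e3 (UC u))) p)
        - (DD e3 (DD e4 (UC u)) p * DD w (DD e3 (DD e4 (UC u))) p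
            + DD e3 (DD e4 (UC u)) p * DD w (DD e3 (DD e4 (UC u))) p) := by
    intro w p
    rw [hH]
    calc DD w (fun q =>
        DD e1 (DD e3 (UC u)) q + DD e3 (DD e3 (UC u)) q * DD e4 (DD e4 (UC u)) q
          - DD e3 (DD e4 (UC u)) q * DD e3 (DD e4 (UC u)) q) p
        = DD w (fun q => DD e1 (DD e3 (UC u)) q
              + DD e3 (DD e3 (UC u)) q * DD e4 (DD e4 (UC u)) q) p
            - DD w (fun q => DD e3 (DD e4 (UC u)) q * DD e3 (DD e4 (UC u)) q) p :=
          DD_sub (h13.add (hC.mul hB)) (hA.mul hA) w p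
      _ = (DD w (DD e1 (DD e3 (UC u))) p
              + DD w (fun q => DD e3 (DD e3 (UC u)) q * DD e4 (DD e4 (UC u)) q) p)
            - DD w (fun q => DD e3 (DD e4 (UC u)) q * DD e3 (DD e4 (UC u)) q) p := by
          rw [DD_add h13 (hC.mul hB) w p]
      _ = _ := by
          rw [DD_mul hC hB w p, DD_mul hA hA w p]
  -- Clairaut facts
  have fact_a : DD e4 (DD e3 (UC u)) = DD e3 (DD e4 (UC u)) :=
    funext fun q => DD_comm hF e4 e3 q
  have f2 : ∀ p : E4, DD e4 (DD e3 (DD e3 (UC u))) p = DD e3 (DD e3 (DD e4 (UC u))) p := by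
    intro p; rw [DD_comm h3 e4 e3 p, fact_a]
  have f3 : ∀ p : E4, DD e4 (DD e3 (DD e4 (UC u))) p = DD e3 (DD e4 (DD e4 (UC u))) p :=
    fun p => DD_comm h4 e4 e3 p
  -- first coefficient identity  (Y P = X R)
  have id1 : ∀ p : E4,
      LOp e2 (DD e3 (DD e3 (UC u))) (fun q => DD e3 (DD e4 (UC u)) q - lam)
        (fun q => DD e3 (DD e4 (UC u)) q + lam) p =
      LOp e1 (fun q => DD e3 (DD e4 (UC u)) q + lam) (DD e4 (DD e4 (UC u)))
        (DD e3 (DD e3 (UC u))) p := by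
    intro p
    simp only [LOp]
    rw [DD_add_const lam e2 p, DD_add_const lam e4 p, DD_add_const lam e3 p]
    have hx : DD e2 (DD e3 (DD e4 (UC u))) p =
        DD e1 (DD e3 (DD e3 (UC u))) p
          + (DD e3 (DD e3 (UC u)) p * DD e3 (DD e4 (DD e4 (UC u))) p
              + DD e4 (DD e4 (UC u)) p * DD e3 (DD e3 (DD e3 (UC u))) p)
          - (DD e3 (DD e4 (UC u)) p * DD e3 (DD e3 (DD e4 (UC u))) p
              + DD e3 (DD e4 (UC u)) p * DD e3 (DD e3 (DD e4 (UC u))) p) := by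
      calc DD e2 (DD e3 (DD e4 (UC u))) p
          = DD e3 (DD e2 (DD e4 (UC u))) p := DD_comm h4 e2 e3 p
        _ = DD e3 (DD e1 (DD e3 (UC u))) p
              + (DD e3 (DD e3 (UC u)) p * DD e3 (DD e4 (DD e4 (UC u))) p
                  + DD e4 (DD e4 (UC u)) p * DD e3 (DD e3 (DD e3 (UC u))) p)
              - (DD e3 (DD e4 (UC u)) p * DD e3 (DD e3 (DD e4 (UC u))) p
                  + DD e3 (DD e4 (UC u)) p * DD e3 (DD e3 (DD e4 (UC u))) p) := hHd e3 p
        _ = _ := by rw [DD_comm h3 e3 e1 p]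
    rw [hx, f2 p, f3 p]
    ring
  -- second coefficient identity  (X S = Y Q)
  have id2 : ∀ p : E4,
      LOp e1 (fun q => DD e3 (DD e4 (UC u)) q + lam) (DD e4 (DD e4 (UC u)))
        (fun q => DD e3 (DD e4 (UC u)) q - lam) p =
      LOp e2 (DD e3 (DD e3 (UC u))) (fun q => DD e3 (DD e4 (UC u)) q - lam)
        (DD e4 (DD e4 (UC u))) p := by
    intro p
    simp only [LOp]
    rw [DD_sub_const lam e1 p, DD_sub_const lam e4 p, DD_sub_const lam e3 p]
    have hx : DD e2 (DD e4 (DD e4 (UC u))) p =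
        DD e1 (DD e3 (DD e4 (UC u))) p
          + (DD e3 (DD e3 (UC u)) p * DD e4 (DD e4 (DD e4 (UC u))) p
              + DD e4 (DD e4 (UC u)) p * DD e4 (DD e3 (DD e3 (UC u))) p)
          - (DD e3 (DD e4 (UC u)) p * DD e4 (DD e3 (DD e4 (UC u))) p
              + DD e3 (DD e4 (UC u)) p * DD e4 (DD e3 (DD e4 (UC u))) p) := by
      calc DD e2 (DD e4 (DD e4 (UC u))) p
          = DD e4 (DD e2 (DD e4 (UC u))) p := DD_comm h4 e2 e4 p
        _ = DD e4 (DD e1 (DD e3 (UC u))) p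
              + (DD e3 (DD e3 (UC u)) p * DD e4 (DD e4 (DD e4 (UC u))) p
                  + DD e4 (DD e4 (UC u)) p * DD e4 (DD e3 (DD e3 (UC u))) p)
              - (DD e3 (DD e4 (UC u)) p * DD e4 (DD e3 (DD e4 (UC u))) p
                  + DD e3 (DD e4 (UC u)) p * DD e4 (DD e3 (DD e4 (UC u))) p) := hHd e4 p
        _ = _ := by rw [DD_comm h3 e4 e1 p, fact_a]
    rw [hx, f2 p, f3 p]
    ring
  -- translation of the operators
  have hUB : UC (opB u lam v) =
      LOp e2 (DD e3 (DD e3 (UC u))) (fun q => DD e3 (DD e4 (UC u)) q - lam) (UC v) := by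
    funext p
    obtain ⟨t', x', y', z'⟩ := p
    show opB u lam v t' x' y' z' = _
    simp only [opB]
    rw [pX_eq hv, pZ_eq hv, pY_eq hv, pY_eq hyu, pY_eq hzu, UC_pY hu, UC_pZ hu]
    rfl
  have hUA : UC (opA u lam v) =
      LOp e1 (fun q => DD e3 (DD e4 (UC u)) q + lam) (DD e4 (DD e4 (UC u))) (UC v) := by
    funext p
    obtain ⟨t', x', y', z'⟩ := p
    show opA u lam v t' x' y' z' = _
    simp only [opA]
    rw [pT_eq hv, pZ_eq hv, pY_eq hv, pY_eq hzu, pZ_eq hzu, UC_pZ hu]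
    rfl
  have hBs : Smooth4 (opB u lam v) := by
    rw [smooth4_iff, hUB]; exact LOp_contDiff hC hS hV e2
  have hAs : Smooth4 (opA u lam v) := by
    rw [smooth4_iff, hUA]; exact LOp_contDiff hP hB hV e1
  have L1 : opA u lam (opB u lam v) t x y z =
      LOp e1 (fun q => DD e3 (DD e4 (UC u)) q + lam) (DD e4 (DD e4 (UC u)))
        (LOp e2 (DD e3 (DD e3 (UC u))) (fun q => DD e3 (DD e4 (UC u)) q - lam) (UC v))
        (t, x, y, z) := by
    simp only [opA]
    rw [pT_eq hBs, pZ_eq hBs, pY_eq hBs, pY_eq hzu, pZ_eq hzu, UC_pZ hu, hUB]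
    rfl
  have L2 : opB u lam (opA u lam v) t x y z =
      LOp e2 (DD e3 (DD e3 (UC u))) (fun q => DD e3 (DD e4 (UC u)) q - lam)
        (LOp e1 (fun q => DD e3 (DD e4 (UC u)) q + lam) (DD e4 (DD e4 (UC u))) (UC v))
        (t, x, y, z) := by
    simp only [opB]
    rw [pX_eq hAs, pZ_eq hAs, pY_eq hAs, pY_eq hyu, pY_eq hzu, UC_pY hu, UC_pZ hu, hUA]
    rfl
  rw [L1, L2]
  have hcomm := LOp_commutator hP hB hC hS hV e1 e2 (t, x, y, z)
  rw [id1 (t, x, y, z), id2 (t, x, y, z)] at hcomm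
  simp only [sub_self, zero_mul, add_zero] at hcomm
  exact sub_eq_zero.mp hcomm
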